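/- Let f : ℝⁿ → ℝⁿ be a super-linearizable polynomial vector field, let g be a real polynomial in n−1 variables, and let φ(x) = (x₁, …, x_{n−1}, xₙ + g(x₁, …, x_{n−1})) be the corresponding elementary transformation of ℝⁿ, whose inverse is φ⁻¹(y) = (y₁, …, y_{n−1}, yₙ − g(y₁, …, y_{n−1})). Then the transformed polynomial vector field h(y) = Dφ(φ⁻¹(y)) · f(φ⁻¹(y)), whose components are h_i(y) = f_i(y₁, …, y_{n−1}, yₙ − g(y₁, …, y_{n−1})) for 1 ≤ i ≤ n−1 and h_n(y) = f_n(y₁, …, y_{n−1}, yₙ − g(y₁, …, y_{n−1})) + Σ_{i=1}^{n−1} (∂g/∂y_i)(y₁, …, y_{n−1}) · f_i(y₁, …, y_{n−1}, yₙ − g(y₁, …, y_{n−1})), is super-linearizable. -/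

import Mathlib

open Matrix MvPolynomial

/-- A map between finite-dimensional real coordinate spaces is polynomial if each
component is given by a real multivariate polynomial. -/
def IsPolyMap {n m : ℕ} (f : (Fin n → ℝ) → (Fin m → ℝ)) : Prop :=
  ∃ P : Fin m → MvPolynomial (Fin n) ℝ, ∀ x i, f x i = MvPolynomial.eval x (P i)

/-- A vector field `f : ℝⁿ → ℝⁿ` is super-linearizable if there are `k ∈ ℕ`, a matrix
`A ∈ ℝ^{(n+k)×(n+k)}` and a polynomial map `p : ℝⁿ → ℝᵏ` such that every solution of
`ẋ = f(x)` starting at `x₀` is, for `t ≥ 0`, the projection on the first `n` coordinates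
of `t ↦ exp(tA)·(x₀, p(x₀))`. -/
def IsSuperLinearizable {n : ℕ} (f : (Fin n → ℝ) → (Fin n → ℝ)) : Prop :=
  ∃ (k : ℕ) (A : Matrix (Fin (n + k)) (Fin (n + k)) ℝ)
    (p : (Fin n → ℝ) → (Fin k → ℝ)), IsPolyMap p ∧
    ∀ (x₀ : Fin n → ℝ) (x : ℝ → (Fin n → ℝ)),
      x 0 = x₀ →
      (∀ t : ℝ, 0 ≤ t → HasDerivAt x (f (x t)) t) →
      ∀ t : ℝ, 0 ≤ t → ∀ i : Fin n,
        (NormedSpace.exp (t • A)).mulVec (Fin.append x₀ (p x₀)) (Fin.castAdd k i) = x t i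

/-!
Let `y` be a trajectory of `h` and `x = φ⁻¹ ∘ y`. By the chain rule `x` is a trajectory of `f`, so
`x(t)` is the projection of `z(t) = exp(tA)(x₀, p(x₀))`, and `y(t) = φ(x(t))` is a vector of
polynomials in `z(t)`. The Lie derivative along `z ↦ A z` does not raise degrees, so the
polynomials of degree at most `d` form a finite-dimensional space on which it acts by a matrix;
with a basis `b` of that space, `c(t) = b(z(t))` satisfies `c' = B c` and `y = L c`. Hence `(y, c)`
is the orbit of `(y₀, b(x₀, p(x₀)))` under `exp(t [[0, L B], [0, B]])`, and its initial value is
polynomial in `y₀`.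
-/

open NormedSpace

attribute [local instance] Matrix.linftyOpNormedRing Matrix.linftyOpNormedAlgebra

namespace MvPolynomial

variable {σ : Type*}

theorem totalDegree_pderiv_lt {R : Type*} [CommSemiring R] {i : σ} {q : MvPolynomial σ R}
    (h : pderiv i q ≠ 0) : (pderiv i q).totalDegree < q.totalDegree := by
  obtain ⟨m, hm, hdeg⟩ := Finset.exists_mem_eq_sup _ (support_nonempty.2 h)
    fun m => m.sum fun _ e => e
  have hm' : m + Finsupp.single i 1 ∈ q.support := by
    rw [mem_support_iff, coeff_pderiv] at hm
    exact mem_support_iff.2 (left_ne_zero_of_mul hm)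
  have := le_totalDegree hm'
  rw [Finsupp.sum_add_index' (fun _ => rfl) (fun _ _ _ => rfl),
    Finsupp.sum_single_index rfl] at this
  rw [totalDegree, hdeg]
  omega

variable [Fintype σ]

/-- The Lie derivative along the linear vector field `x ↦ A x`. -/
noncomputable def linearFieldDeriv {R : Type*} [CommSemiring R] (A : Matrix σ σ R) :
    MvPolynomial σ R →ₗ[R] MvPolynomial σ R :=
  ∑ l, LinearMap.mulRight R (∑ i, C (A l i) * X i) ∘ₗ (pderiv l).toLinearMap

theorem linearFieldDeriv_apply {R : Type*} [CommSemiring R] (A : Matrix σ σ R)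
    (r : MvPolynomial σ R) :
    linearFieldDeriv A r = ∑ l, pderiv l r * ∑ i, C (A l i) * X i := by
  simp [linearFieldDeriv]

theorem eval_linearFieldDeriv {R : Type*} [CommSemiring R] (A : Matrix σ σ R)
    (r : MvPolynomial σ R) (x : σ → R) :
    eval x (linearFieldDeriv A r) = ∑ l, eval x (pderiv l r) * (A *ᵥ x) l := by
  simp [linearFieldDeriv_apply, mulVec, dotProduct]

theorem totalDegree_linearFieldDeriv_le {R : Type*} [CommSemiring R] (A : Matrix σ σ R)
    (r : MvPolynomial σ R) : (linearFieldDeriv A r).totalDegree ≤ r.totalDegree := by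
  rw [linearFieldDeriv_apply]
  refine (totalDegree_finsetSum _ _).trans (Finset.sup_le fun l _ => ?_)
  by_cases h : pderiv l r = 0
  · simp [h]
  have hlin : (∑ i, C (A l i) * X i : MvPolynomial σ R).totalDegree ≤ 1 :=
    (totalDegree_finsetSum _ _).trans <| Finset.sup_le fun i _ =>
      by rw [C_mul_X_eq_monomial]; exact (totalDegree_monomial_le _ _).trans (by simp)
  have := totalDegree_pderiv_lt h
  exact (totalDegree_mul _ _).trans (by omega)

theorem hasDerivAt_eval (q : MvPolynomial σ ℝ) {z : ℝ → σ → ℝ} {z' : σ → ℝ} {t : ℝ}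
    (hz : HasDerivAt z z' t) :
    HasDerivAt (fun s => eval (z s) q) (∑ j, eval (z t) (pderiv j q) * z' j) t := by
  induction q using MvPolynomial.induction_on with
  | C a => simpa using hasDerivAt_const t a
  | add p q hp hq =>
    simpa only [map_add, add_mul, Finset.sum_add_distrib] using hp.fun_add hq
  | mul_X p i hp =>
    classical
    simp only [map_mul, eval_X]
    refine (hp.fun_mul (hasDerivAt_pi.1 hz i)).congr_deriv ?_
    simp only [Derivation.leibniz, pderiv_X, smul_eq_mul, map_add, map_mul, eval_X, add_mul,
      Finset.sum_add_distrib, Finset.sum_mul]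
    simp [Pi.single_apply, add_comm, mul_comm, mul_left_comm]

end MvPolynomial

namespace Matrix

variable {ι : Type*} [Fintype ι] [DecidableEq ι]

theorem hasDerivAt_exp_smul_mulVec (A : Matrix ι ι ℝ) (v : ι → ℝ) (t : ℝ) :
    HasDerivAt (fun s => exp (s • A) *ᵥ v) (A *ᵥ (exp (t • A) *ᵥ v)) t := by
  rw [mulVec_mulVec]
  exact (LinearMap.toContinuousLinearMap ((mulVecBilin ℝ ℝ).flip v)).hasFDerivAt.comp_hasDerivAt t
    (hasDerivAt_exp_smul_const' A t)

theorem eq_exp_smul_mulVec_of_hasDerivAt (A : Matrix ι ι ℝ) {W : ℝ → ι → ℝ}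
    (hW : ∀ t, HasDerivAt W (A *ᵥ W t) t) (t : ℝ) : W t = exp (t • A) *ᵥ W 0 := by
  have hA : LipschitzWith ‖LinearMap.toContinuousLinearMap A.mulVecLin‖₊ (A *ᵥ ·) :=
    (LinearMap.toContinuousLinearMap A.mulVecLin).lipschitz
  refine congrFun (ODE_solution_unique_univ (v := fun _ => (A *ᵥ ·)) (s := fun _ => Set.univ)
    (t₀ := 0) (fun _ => hA.lipschitzOnWith) (fun t => ⟨hW t, trivial⟩)
    (fun t => ⟨hasDerivAt_exp_smul_mulVec A (W 0) t, trivial⟩) (by simp)) t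

variable {m M : ℕ}

noncomputable def blockAugment (L : Matrix (Fin m) (Fin M) ℝ) (B : Matrix (Fin M) (Fin M) ℝ) :
    Matrix (Fin (m + M)) (Fin (m + M)) ℝ :=
  reindex finSumFinEquiv finSumFinEquiv (fromBlocks 0 (L * B) 0 B)

theorem blockAugment_mulVec_append (L : Matrix (Fin m) (Fin M) ℝ) (B : Matrix (Fin M) (Fin M) ℝ)
    (y : Fin m → ℝ) (c : Fin M → ℝ) :
    blockAugment L B *ᵥ Fin.append y c = Fin.append ((L * B) *ᵥ c) (B *ᵥ c) := by
  ext l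
  induction l using Fin.addCases <;>
    simp [blockAugment, reindex_apply, submatrix_mulVec_equiv, fromBlocks_mulVec, Function.comp_def]

theorem exp_smul_blockAugment_mulVec_append (L : Matrix (Fin m) (Fin M) ℝ)
    (B : Matrix (Fin M) (Fin M) ℝ) (c : Fin M → ℝ) (t : ℝ) :
    exp (t • blockAugment L B) *ᵥ Fin.append (L *ᵥ c) c =
      Fin.append (L *ᵥ (exp (t • B) *ᵥ c)) (exp (t • B) *ᵥ c) := by
  have hderiv (s : ℝ) :
      HasDerivAt (fun s => Fin.append (L *ᵥ (exp (s • B) *ᵥ c)) (exp (s • B) *ᵥ c))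
        (blockAugment L B *ᵥ Fin.append (L *ᵥ (exp (s • B) *ᵥ c)) (exp (s • B) *ᵥ c)) s := by
    have hu := hasDerivAt_exp_smul_mulVec B c s
    have hLu := (LinearMap.toContinuousLinearMap L.mulVecLin).hasFDerivAt.comp_hasDerivAt s hu
    rw [blockAugment_mulVec_append, hasDerivAt_pi]
    intro l
    induction l using Fin.addCases
    · simpa [mulVec_mulVec, Matrix.mul_assoc] using hasDerivAt_pi.1 hLu _
    · simpa using hasDerivAt_pi.1 hu _
  simpa using (eq_exp_smul_mulVec_of_hasDerivAt _ hderiv t).symm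

end Matrix

namespace MvPolynomial

variable {σ : Type*} [Fintype σ] [DecidableEq σ]

theorem hasDerivAt_eval_exp_smul_mulVec (A : Matrix σ σ ℝ) (r : MvPolynomial σ ℝ) (v : σ → ℝ)
    (t : ℝ) :
    HasDerivAt (fun s => eval (exp (s • A) *ᵥ v) r)
      (eval (exp (t • A) *ᵥ v) (linearFieldDeriv A r)) t := by
  rw [eval_linearFieldDeriv]
  exact hasDerivAt_eval r (hasDerivAt_exp_smul_mulVec A v t)

theorem exists_linear_lift_eval_exp_smul_mulVec (A : Matrix σ σ ℝ) {m : ℕ}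
    (q : Fin m → MvPolynomial σ ℝ) :
    ∃ (M : ℕ) (B : Matrix (Fin M) (Fin M) ℝ) (b : Fin M → MvPolynomial σ ℝ)
      (L : Matrix (Fin m) (Fin M) ℝ),
      (∀ v, (fun j => eval v (q j)) = L *ᵥ fun i => eval v (b i)) ∧
      ∀ v (t : ℝ),
        (fun i => eval (exp (t • A) *ᵥ v) (b i)) = exp (t • B) *ᵥ fun i => eval v (b i) := by
  let V := restrictTotalDegree σ ℝ (Finset.univ.sup fun j => (q j).totalDegree)
  have hqV (j : Fin m) : q j ∈ V :=
    (mem_restrictTotalDegree _ _ _).2 (Finset.le_sup (f := fun j => (q j).totalDegree)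
      (Finset.mem_univ j))
  have hV : ∀ r ∈ V, linearFieldDeriv A r ∈ V := fun r hr => by
    rw [mem_restrictTotalDegree] at hr ⊢
    exact (totalDegree_linearFieldDeriv_le A r).trans hr
  let b := Module.finBasis ℝ V
  let T := LinearMap.toMatrix b b ((linearFieldDeriv A).restrict hV)
  have hT (i) : linearFieldDeriv A (b i) = ∑ j, T j i • (b j : MvPolynomial σ ℝ) := by
    have h := congrArg Subtype.val (b.sum_repr ((linearFieldDeriv A).restrict hV (b i)))
    simp only [Submodule.coe_sum, Submodule.coe_smul, LinearMap.coe_restrict_apply] at h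
    simpa only [T, LinearMap.toMatrix_apply] using h.symm
  refine ⟨_, Tᵀ, fun i => b i, fun j i => b.repr ⟨q j, hqV j⟩ i, fun v => ?_, fun v t => ?_⟩
  · ext j
    have h := congrArg (eval v ∘ Subtype.val) (b.sum_repr ⟨q j, hqV j⟩)
    simp only [Function.comp_apply, Submodule.coe_sum, Submodule.coe_smul, map_sum,
      smul_eval] at h
    exact h.symm
  · have hderiv (s : ℝ) : HasDerivAt (fun s i => eval (exp (s • A) *ᵥ v) (b i : MvPolynomial σ ℝ))
        (Tᵀ *ᵥ fun i => eval (exp (s • A) *ᵥ v) (b i)) s :=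
      hasDerivAt_pi.2 fun i => by
        simpa [hT, mulVec, dotProduct] using hasDerivAt_eval_exp_smul_mulVec A (b i) v s
    simpa using eq_exp_smul_mulVec_of_hasDerivAt Tᵀ hderiv t

end MvPolynomial

theorem IsPolyMap.comp {a b c : ℕ} {v : (Fin b → ℝ) → Fin c → ℝ} {u : (Fin a → ℝ) → Fin b → ℝ}
    (hv : IsPolyMap v) (hu : IsPolyMap u) : IsPolyMap (v ∘ u) := by
  obtain ⟨P, hP⟩ := hu
  obtain ⟨Q, hQ⟩ := hv
  refine ⟨fun i => bind₁ P (Q i), fun x i => ?_⟩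
  rw [Function.comp_apply, hQ, show u x = fun j => eval x (P j) from funext (hP x)]
  exact (eval₂Hom_bind₁ _ _ _ _).symm

theorem IsPolyMap.append {a b c : ℕ} {u : (Fin a → ℝ) → Fin b → ℝ} {v : (Fin a → ℝ) → Fin c → ℝ}
    (hu : IsPolyMap u) (hv : IsPolyMap v) : IsPolyMap fun x => Fin.append (u x) (v x) := by
  obtain ⟨P, hP⟩ := hu
  obtain ⟨Q, hQ⟩ := hv
  refine ⟨Fin.append P Q, fun x l => ?_⟩
  induction l using Fin.addCases <;> simp [hP, hQ]

theorem IsSuperLinearizable.of_leftInverse {m n : ℕ} {f : (Fin n → ℝ) → Fin n → ℝ}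
    {h : (Fin m → ℝ) → Fin m → ℝ} {χ : (Fin m → ℝ) → Fin n → ℝ} {ψ : (Fin n → ℝ) → Fin m → ℝ}
    (hf : IsSuperLinearizable f) (hχ : IsPolyMap χ) (hψ : IsPolyMap ψ)
    (hψχ : Function.LeftInverse ψ χ)
    (hflow : ∀ (y : ℝ → Fin m → ℝ) (t : ℝ), HasDerivAt y (h (y t)) t →
      HasDerivAt (χ ∘ y) (f (χ (y t))) t) :
    IsSuperLinearizable h := by
  obtain ⟨k, A, p, hp, hA⟩ := hf
  obtain ⟨Ψ, hΨ⟩ := hψ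
  obtain ⟨M, B, b, L, hL, hb⟩ :=
    MvPolynomial.exists_linear_lift_eval_exp_smul_mulVec A fun j => rename (Fin.castAdd k) (Ψ j)
  have hψ_eval (x : Fin (n + k) → ℝ) (j : Fin m) :
      eval x (rename (Fin.castAdd k) (Ψ j)) = ψ (fun i => x (Fin.castAdd k i)) j := by
    rw [eval_rename, hΨ]
    rfl
  let c₀ : (Fin m → ℝ) → Fin M → ℝ := fun y i => eval (Fin.append (χ y) (p (χ y))) (b i)
  have hc₀ : IsPolyMap c₀ :=
    IsPolyMap.comp (v := fun x i => eval x (b i)) ⟨b, fun _ _ => rfl⟩ (hχ.append (hp.comp hχ))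
  refine ⟨M, Matrix.blockAugment L B, c₀, hc₀, fun y₀ y hy0 hy t ht j => ?_⟩
  have hy₀ : L *ᵥ c₀ y₀ = y₀ := by
    rw [← hL]
    ext j
    simp [hψ_eval, hψχ y₀]
  have hx := hA (χ y₀) (χ ∘ y) (by simp [hy0]) (fun t ht => hflow y t (hy t ht)) t ht
  have hlift := Matrix.exp_smul_blockAugment_mulVec_append L B (c₀ y₀) t
  rw [hy₀] at hlift
  rw [hlift, Fin.append_left, ← hb, ← hL]
  simp only [hψ_eval, hx, Function.comp_apply]
  exact congrFun (hψχ (y t)) j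

section ElementaryMap

variable {n : ℕ}

noncomputable def elementaryMap (g : MvPolynomial (Fin n) ℝ) (x : Fin (n + 1) → ℝ) :
    Fin (n + 1) → ℝ :=
  Function.update x (Fin.last n) (x (Fin.last n) + eval (fun i => x i.castSucc) g)

@[simp]
theorem elementaryMap_castSucc (g : MvPolynomial (Fin n) ℝ) (x : Fin (n + 1) → ℝ) (i : Fin n) :
    elementaryMap g x i.castSucc = x i.castSucc :=
  Function.update_of_ne (Fin.castSucc_lt_last i).ne _ _

@[simp]
theorem elementaryMap_last (g : MvPolynomial (Fin n) ℝ) (x : Fin (n + 1) → ℝ) :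
    elementaryMap g x (Fin.last n) = x (Fin.last n) + eval (fun i => x i.castSucc) g :=
  Function.update_self _ _ _

theorem leftInverse_elementaryMap_neg (g : MvPolynomial (Fin n) ℝ) :
    Function.LeftInverse (elementaryMap g) (elementaryMap (-g)) := fun x => by
  ext j
  induction j using Fin.lastCases <;> simp

theorem isPolyMap_elementaryMap (g : MvPolynomial (Fin n) ℝ) : IsPolyMap (elementaryMap g) := by
  refine ⟨Fin.lastCases (X (Fin.last n) + rename Fin.castSucc g) fun i => X i.castSucc,
    fun x j => ?_⟩
  induction j using Fin.lastCases <;> simp [eval_rename, Function.comp_def]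

theorem HasDerivAt.elementaryMap_comp (g : MvPolynomial (Fin n) ℝ) {y : ℝ → Fin (n + 1) → ℝ}
    {u : Fin (n + 1) → ℝ} {t : ℝ} (hy : HasDerivAt y u t) :
    HasDerivAt (elementaryMap g ∘ y) (Function.update u (Fin.last n) (u (Fin.last n) +
      ∑ i, eval (fun i => y t i.castSucc) (pderiv i g) * u i.castSucc)) t := by
  have hyi := hasDerivAt_pi.1 hy
  rw [hasDerivAt_pi]
  intro j
  induction j using Fin.lastCases with
  | last =>
    simpa using (hyi _).fun_add (hasDerivAt_eval g (hasDerivAt_pi.2 fun i => hyi i.castSucc))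
  | cast i => simpa [(Fin.castSucc_lt_last i).ne] using hyi i.castSucc

end ElementaryMap

theorem superlinearizable_of_elementary_general {n : ℕ}
    (f : (Fin (n + 1) → ℝ) → (Fin (n + 1) → ℝ))
    (hfsl : IsSuperLinearizable f)
    (g : MvPolynomial (Fin n) ℝ)
    (φinv : (Fin (n + 1) → ℝ) → (Fin (n + 1) → ℝ))
    (hφinv : ∀ y, φinv y = Function.update y (Fin.last n)
      (y (Fin.last n) - MvPolynomial.eval (fun i => y i.castSucc) g))
    (h : (Fin (n + 1) → ℝ) → (Fin (n + 1) → ℝ))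
    (hh : ∀ (y : Fin (n + 1) → ℝ) (j : Fin (n + 1)), h y j =
      if j = Fin.last n then
        f (φinv y) j + ∑ i : Fin n,
          MvPolynomial.eval (fun i' => y i'.castSucc) (MvPolynomial.pderiv i g) *
            f (φinv y) i.castSucc
      else f (φinv y) j) :
    IsSuperLinearizable h := by
  obtain rfl : φinv = elementaryMap (-g) :=
    funext fun y => by simp [hφinv, elementaryMap, sub_eq_add_neg]
  refine hfsl.of_leftInverse (isPolyMap_elementaryMap _) (isPolyMap_elementaryMap g)
    (leftInverse_elementaryMap_neg g) fun y t hy => ?_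
  convert hy.elementaryMap_comp (-g) using 1
  ext j
  induction j using Fin.lastCases <;> simp [hh, (Fin.castSucc_lt_last _).ne]

/-- Super-linearizability is preserved by elementary transformations. Working in `ℝ^{n+1}`:
let `φ(x) = (x₁, …, xₙ, x_{n+1} + g(x₁, …, xₙ))`, whose inverse is
`φ⁻¹(y) = (y₁, …, yₙ, y_{n+1} − g(y₁, …, yₙ))`. If `f` is a super-linearizable polynomial
vector field, then the transformed vector field `h(y) = Dφ(φ⁻¹(y)) · f(φ⁻¹(y))`, whose
components are `hᵢ(y) = fᵢ(φ⁻¹(y))` for `i ≤ n` and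
`h_{n+1}(y) = f_{n+1}(φ⁻¹(y)) + Σᵢ (∂g/∂yᵢ)(y₁, …, yₙ) fᵢ(φ⁻¹(y))`,
is super-linearizable. -/
theorem superlinearizable_of_elementary {n : ℕ}
    (f : (Fin (n + 1) → ℝ) → (Fin (n + 1) → ℝ))
    (hfpoly : IsPolyMap f) (hfsl : IsSuperLinearizable f)
    (g : MvPolynomial (Fin n) ℝ)
    (φinv : (Fin (n + 1) → ℝ) → (Fin (n + 1) → ℝ))
    (hφinv : ∀ y, φinv y = Function.update y (Fin.last n)
      (y (Fin.last n) - MvPolynomial.eval (fun i => y i.castSucc) g))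
    (h : (Fin (n + 1) → ℝ) → (Fin (n + 1) → ℝ))
    (hh : ∀ (y : Fin (n + 1) → ℝ) (j : Fin (n + 1)), h y j =
      if j = Fin.last n then
        f (φinv y) j + ∑ i : Fin n,
          MvPolynomial.eval (fun i' => y i'.castSucc) (MvPolynomial.pderiv i g) *
            f (φinv y) i.castSucc
      else f (φinv y) j) :
    IsSuperLinearizable h :=
  superlinearizable_of_elementary_general f hfsl g φinv hφinv h hh
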